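/- (Total ellipticity in a) The standard elliptic weight w(n,m;a,b;q,p) is invariant under the substitution a ↦ pa: for all integers n, m and nonzero a, b, q with 0 < |p| < 1, w(n,m;pa,b;q,p) = w(n,m;a,b;q,p), assuming all theta factors in denominators are nonzero. -/

import Mathlib

open Finset

noncomputable def pochInf (x p : ℂ) : ℂ := ∏' k : ℕ, (1 - x * p ^ k)

noncomputable def theta (x p : ℂ) : ℂ := pochInf x p * pochInf (p / x) p

noncomputable def qps (a q p : ℂ) (n : ℤ) : ℂ :=
  if 0 ≤ n then ∏ k ∈ Finset.range n.toNat, theta (a * q ^ (k : ℤ)) p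
  else (∏ k ∈ Finset.range (-n).toNat, theta (a * q ^ (n + k)) p)⁻¹
noncomputable def w (a b q p : ℂ) (n m : ℤ) : ℂ :=
  theta (a * q ^ (n + 2*m)) p * theta (b * q ^ (2*n)) p * theta (b * q ^ (2*n - 1)) p
    * theta (a * q ^ (1 - n) / b) p * theta (a * q ^ (-n) / b) p
  / (theta (a * q ^ n) p * theta (b * q ^ (2*n + m)) p * theta (b * q ^ (2*n + m - 1)) p
    * theta (a * q ^ (1 + m - n) / b) p * theta (a * q ^ (m - n) / b) p)
  * q ^ m

noncomputable def W (a b q p : ℂ) (l k n m : ℤ) : ℂ :=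
  (qps (q ^ (1 + n - l)) q p (m - k) * qps (a * q ^ (1 + n + 2*k)) q p (m - k)
    * qps (b * q ^ (1 + n + k + l)) q p (m - k) * qps (a * q ^ (1 + k - n) / b) q p (m - k))
  / (qps q q p (m - k) * qps (a * q ^ (1 + l + 2*k)) q p (m - k)
    * qps (b * q ^ (1 + 2*n + k)) q p (m - k) * qps (a * q ^ (1 + k - l) / b) q p (m - k))
  * ((qps (a * q ^ (1 + l + 2*k)) q p (n - l) * qps (a * q ^ (1 - n) / b) q p (n - l)
    * qps (a * q ^ (-n) / b) q p (n - l))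
  / (qps (a * q ^ (1 + l)) q p (n - l) * qps (a * q ^ (1 + k - n) / b) q p (n - l)
    * qps (a * q ^ (k - n) / b) q p (n - l)))
  * (qps (b * q ^ (1 + 2*l)) q p (2*n - 2*l) / qps (b * q ^ (1 + k + 2*l)) q p (2*n - 2*l))
  * q ^ ((n - l) * k)

noncomputable def GF (wt : ℤ → ℤ → ℂ) (l k : ℤ) : ℕ → ℕ → ℂ
  | 0, 0 => 1
  | 0, _ + 1 => 1
  | i + 1, 0 => GF wt l k i 0 * wt (l + i + 1) k
  | i + 1, j + 1 => GF wt l k (i + 1) j + GF wt l k i (j + 1) * wt (l + i + 1) (k + j + 1)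
termination_by i j => (i, j)

/-!
Quasi-periodicity `θ(px) = -x⁻¹ θ(x)` follows from peeling off the first factor of
`(x; p)_∞`. Applied to a ratio of theta products whose numerator and denominator have
the same number of factors and the same product of arguments (a balanced ratio), the
factors `-x⁻¹` cancel. In `w(n, m; a, b)` the arguments containing `a` form such a
balanced ratio: `(a q^{n+2m}) (a q^{1-n}/b) (a q^{-n}/b) = (a q^n) (a q^{1+m-n}/b) (a q^{m-n}/b)`.
-/

section Theta

variable {p : ℂ}

lemma multipliable_one_sub_mul_pow (x : ℂ) (hp : ‖p‖ < 1) :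
    Multipliable fun k : ℕ => 1 - x * p ^ k := by
  simpa [sub_eq_add_neg] using multipliable_one_add_of_summable (f := fun k : ℕ => -(x * p ^ k))
    (by simpa using (summable_geometric_of_lt_one (norm_nonneg p) hp).mul_left ‖x‖)

lemma pochInf_eq_one_sub_mul (x : ℂ) (hp : ‖p‖ < 1) :
    pochInf x p = (1 - x) * pochInf (p * x) p := by
  have hshift : (fun k : ℕ => 1 - x * p ^ (k + 1)) = fun k : ℕ => 1 - p * x * p ^ k := by
    funext k; ring
  have h := tprod_eq_zero_mul' (f := fun k : ℕ => 1 - x * p ^ k)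
    (hshift ▸ multipliable_one_sub_mul_pow (p * x) hp)
  simpa only [pochInf, pow_zero, mul_one, hshift] using h

lemma theta_mul_left {x : ℂ} (hx : x ≠ 0) (hp0 : p ≠ 0) (hp : ‖p‖ < 1) :
    theta (p * x) p = -x⁻¹ * theta x p := by
  have hdiv : p / (p * x) = x⁻¹ := by field_simp
  rw [theta, theta, hdiv, pochInf_eq_one_sub_mul x⁻¹ hp, pochInf_eq_one_sub_mul x hp,
    ← div_eq_mul_inv]
  field_simp
  ring

lemma prod_theta_mul_left {ι : Type*} (s : Finset ι) {x : ι → ℂ} (hx : ∀ i ∈ s, x i ≠ 0)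
    (hp0 : p ≠ 0) (hp : ‖p‖ < 1) :
    ∏ i ∈ s, theta (p * x i) p = (-1) ^ #s * (∏ i ∈ s, x i)⁻¹ * ∏ i ∈ s, theta (x i) p := by
  rw [prod_congr rfl fun i hi => theta_mul_left (hx i hi) hp0 hp, ← prod_inv_distrib,
    ← prod_const, ← prod_mul_distrib, ← prod_mul_distrib]
  simp only [neg_mul, one_mul]

lemma prod_theta_mul_left_div_prod_of_balanced {ι κ : Type*} (s : Finset ι) (t : Finset κ)
    {x : ι → ℂ} {y : κ → ℂ} (hx : ∀ i ∈ s, x i ≠ 0) (hy : ∀ j ∈ t, y j ≠ 0)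
    (hcard : #s = #t) (hprod : ∏ i ∈ s, x i = ∏ j ∈ t, y j) (hp0 : p ≠ 0) (hp : ‖p‖ < 1) :
    (∏ i ∈ s, theta (p * x i) p) / ∏ j ∈ t, theta (p * y j) p
      = (∏ i ∈ s, theta (x i) p) / ∏ j ∈ t, theta (y j) p := by
  have hfactor : (-1) ^ #s * (∏ i ∈ s, x i)⁻¹ ≠ 0 :=
    mul_ne_zero (pow_ne_zero _ (by norm_num)) (inv_ne_zero (prod_ne_zero_iff.mpr hx))
  rw [prod_theta_mul_left s hx hp0 hp, prod_theta_mul_left t hy hp0 hp, ← hcard, ← hprod,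
    mul_div_mul_left _ _ hfactor]

end Theta

theorem elliptic_weight_total_ellipticity_general (a b q p : ℂ) (ha : a ≠ 0) (hb : b ≠ 0) (hq : q ≠ 0)
    (hp0 : 0 < ‖p‖) (hp : ‖p‖ < 1)
    (n m : ℤ) :
    w (p * a) b q p n m = w a b q p n m := by
  have hpa (i : ℤ) : p * a * q ^ i = p * (a * q ^ i) := mul_assoc _ _ _
  have hpab (i : ℤ) : p * (a * q ^ i) / b = p * (a * q ^ i / b) := mul_div_assoc _ _ _
  have hqi (i : ℤ) : q ^ i ≠ 0 := zpow_ne_zero i hq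
  have hbalance : a * q ^ (n + 2*m) * (a * q ^ (1 - n) / b) * (a * q ^ (-n) / b)
      = a * q ^ n * (a * q ^ (1 + m - n) / b) * (a * q ^ (m - n) / b) := by
    field_simp
    simp only [← zpow_add₀ hq]
    ring_nf
  have hratio := prod_theta_mul_left_div_prod_of_balanced univ univ
    (x := ![a * q ^ (n + 2*m), a * q ^ (1 - n) / b, a * q ^ (-n) / b])
    (y := ![a * q ^ n, a * q ^ (1 + m - n) / b, a * q ^ (m - n) / b])
    (by simp [Fin.forall_fin_succ, ha, hb, hqi]) (by simp [Fin.forall_fin_succ, ha, hb, hqi]) rfl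
    (by simpa [Fin.prod_univ_three] using hbalance) (norm_pos_iff.mp hp0) hp
  simp only [Fin.prod_univ_three, Matrix.cons_val] at hratio
  simp only [w, hpa, hpab]
  linear_combination (theta (b * q ^ (2*n)) p * theta (b * q ^ (2*n - 1)) p
    / (theta (b * q ^ (2*n + m)) p * theta (b * q ^ (2*n + m - 1)) p) * q ^ m) * hratio

theorem elliptic_weight_total_ellipticity (a b q p : ℂ) (ha : a ≠ 0) (hb : b ≠ 0) (hq : q ≠ 0)
    (hp0 : 0 < ‖p‖) (hp : ‖p‖ < 1)
    (hA : ∀ i : ℤ, theta (a * q ^ i) p ≠ 0)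
    (hB : ∀ i : ℤ, theta (b * q ^ i) p ≠ 0)
    (hAB : ∀ i : ℤ, theta (a * q ^ i / b) p ≠ 0)
    (hPA : ∀ i : ℤ, theta (p * a * q ^ i) p ≠ 0)
    (hPAB : ∀ i : ℤ, theta (p * a * q ^ i / b) p ≠ 0)
    (n m : ℤ) :
    w (p * a) b q p n m = w a b q p n m :=
  elliptic_weight_total_ellipticity_general a b q p ha hb hq hp0 hp n m
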